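/- Let X and Y be Banach spaces, let G ∈ L(X,Y) with ‖G‖ = 1, and let T ∈ L(X,Y) with ‖T‖_G = 1. If φ ∈ L(X,Y)* lies in the weak*-closure of { ψ_{x_α, y_α*} : (x_α, y_α*) ∈ 𝒜_G(T) }, i.e., φ is a weak* limit of a net of functionals ψ_{x_α, y_α*} with (x_α) ⊂ S_X, (y_α*) ⊂ S_{Y*}, ‖G x_α‖ → 1 and y_α*(T x_α) → 1, then φ(T) = 1 and |φ(S)| ≤ ‖S‖_G for all S ∈ L(X,Y); in particular φ is a norm-one support functional of T with respect to the G-norm. -/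
import Mathlib


open Filter Topology

universe u v w

variable {𝕜 : Type u} [RCLike 𝕜]

/-- The `G`-norm of an operator `T`:
`‖T‖_G := inf_{δ>0} sup {‖Tx‖ : x ∈ S_X, ‖Gx‖ > 1 - δ}`. -/
noncomputable def Gnorm {X Y : Type*} [NormedAddCommGroup X] [NormedSpace 𝕜 X]
    [NormedAddCommGroup Y] [NormedSpace 𝕜 Y] (G T : X →L[𝕜] Y) : ℝ :=
  ⨅ δ : {δ : ℝ // 0 < δ},
    sSup {r : ℝ | ∃ x : X, ‖x‖ = 1 ∧ 1 - (δ : ℝ) < ‖G x‖ ∧ r = ‖T x‖}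

/-- If `‖T‖_G = 1` and `φ` is a weak* limit of a net of functionals
`ψ_{x_α, y_α*}` with `(x_α, y_α*)` in `𝒜_G(T)` (that is, `x_α ∈ S_X`, `y_α* ∈ S_{Y*}`,
`‖G x_α‖ → 1` and `y_α*(T x_α) → 1`), then `φ(T) = 1` and `|φ(S)| ≤ ‖S‖_G` for all `S`;
in particular `φ` is a norm-one support functional of `T` for the `G`-norm. -/
theorem stmt_15 {X : Type v} {Y : Type w}
    [NormedAddCommGroup X] [NormedSpace 𝕜 X] [CompleteSpace X]
    [NormedAddCommGroup Y] [NormedSpace 𝕜 Y] [CompleteSpace Y]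
    (G : X →L[𝕜] Y) (hG : ‖G‖ = 1)
    (hGnorm : ∀ S : X →L[𝕜] Y, Gnorm G S = 0 → S = 0)
    (T : X →L[𝕜] Y) (hT : Gnorm G T = 1)
    (φ : (X →L[𝕜] Y) →L[𝕜] 𝕜)
    (hφ : ∃ (ι : Type (max u v w)) (l : Filter ι), l.NeBot ∧
      ∃ (x : ι → X) (y : ι → (Y →L[𝕜] 𝕜)),
        (∀ i, ‖x i‖ = 1) ∧ (∀ i, ‖y i‖ = 1) ∧
        Tendsto (fun i => ‖G (x i)‖) l (𝓝 1) ∧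
        Tendsto (fun i => (y i) (T (x i))) l (𝓝 1) ∧
        (∀ S : X →L[𝕜] Y, Tendsto (fun i => (y i) (S (x i))) l (𝓝 (φ S)))) :
    φ T = 1 ∧ ∀ S : X →L[𝕜] Y, ‖φ S‖ ≤ Gnorm G S := by
  obtain ⟨ι, l, hl, x, y, hx, hy, hGx, hTx, hlim⟩ := hφ
  constructor
  · exact tendsto_nhds_unique (hlim T) hTx
  · intro S
    apply le_ciInf
    rintro ⟨δ, hδ⟩
    set A : Set ℝ := {r : ℝ | ∃ x : X, ‖x‖ = 1 ∧ 1 - δ < ‖G x‖ ∧ r = ‖S x‖} with hA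
    have hbdd : BddAbove A := by
      refine ⟨‖S‖, ?_⟩
      rintro r ⟨z, hz, -, rfl⟩
      calc ‖S z‖ ≤ ‖S‖ * ‖z‖ := S.le_opNorm z
        _ = ‖S‖ := by rw [hz, mul_one]
    have hev : ∀ᶠ i in l, ‖(y i) (S (x i))‖ ≤ sSup A := by
      have h1 : ∀ᶠ i in l, 1 - δ < ‖G (x i)‖ := by
        have := hGx (Ioi_mem_nhds (by linarith : (1 : ℝ) - δ < 1))
        filter_upwards [this] with i hi using hi
      filter_upwards [h1] with i hi
      have hmem : ‖S (x i)‖ ∈ A := ⟨x i, hx i, hi, rfl⟩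
      have : ‖(y i) (S (x i))‖ ≤ ‖S (x i)‖ := by
        calc ‖(y i) (S (x i))‖ ≤ ‖y i‖ * ‖S (x i)‖ := (y i).le_opNorm _
          _ = ‖S (x i)‖ := by rw [hy i, one_mul]
      exact this.trans (le_csSup hbdd hmem)
    have hnorm : Tendsto (fun i => ‖(y i) (S (x i))‖) l (𝓝 ‖φ S‖) :=
      (continuous_norm.tendsto _).comp (hlim S)
    exact le_of_tendsto hnorm hev
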